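/- In the networked SEIRS model with travel flows, assume the flow balance condition γ_i = Σ_{j≠i} Φ_{ij} holds for every i, all parameters α_i, β_i, σ_i, δ_i, γ_i are strictly positive, and s(U) < 0 for U = [[−Σ−Γ+Φ, B],[Σ, −D−Γ+Φ]]. Then the matrix exponential of the Jacobian J = [[−Σ−Γ+Φ, B, 0],[Σ, −D−Γ+Φ, 0],[0, D, −A−Γ+Φ]] at the healthy state decays: exp(tJ) → 0 as t → ∞, so every solution of the linearized (e,x,r)-dynamics at the healthy state converges to zero. -/

import Mathlib

/-!
The Jacobian `J` is block lower triangular with diagonal blocks `U` and `Z = -A - Γ + Φ`, so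
its spectrum is that of `U` together with that of `Z`. The off-diagonal entries of `Z` are the
nonnegative flows `Φᵢⱼ`, and by flow balance its row sums are `-αᵢ < 0`; Gershgorin's theorem
then puts the spectrum of `Z` in the open left half-plane, where that of `U` lies by assumption.
Finally, a matrix with spectrum in the open left half-plane has `exp (tJ) → 0`: on the
generalized eigenspace of `μ` it acts as `e^{tμ}` times a polynomial in `t`.
-/

open Finset Matrix NormedSpace Filter

/-- The spectral abscissa of a real square matrix: the maximum real part of its
complex eigenvalues. -/
noncomputable def spectralAbscissa {m : Type*} [Fintype m] [DecidableEq m]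
    (M : Matrix m m ℝ) : ℝ :=
  sSup (Complex.re '' spectrum ℂ (M.map Complex.ofReal))

/-- A square block matrix assembled from a `k × k` array of `n × n` blocks. -/
def blockMat {k n : ℕ} (Bl : Fin k → Fin k → Matrix (Fin n) (Fin n) ℝ) :
    Matrix (Fin k × Fin n) (Fin k × Fin n) ℝ :=
  Matrix.of fun p q => Bl p.1 q.1 p.2 q.2

open scoped Topology Nat

section Spectrum

variable {m : Type*} [Fintype m] [DecidableEq m]

lemma re_le_spectralAbscissa (M : Matrix m m ℝ) {μ : ℂ}
    (hμ : μ ∈ spectrum ℂ (M.map Complex.ofReal)) : μ.re ≤ spectralAbscissa M :=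
  le_csSup ((finite_spectrum _).image _).bddAbove ⟨μ, hμ, rfl⟩

lemma re_neg_of_mem_spectrum_of_sum_norm_lt (A : Matrix m m ℂ)
    (hA : ∀ k, ∑ j ∈ univ.erase k, ‖A k j‖ < -(A k k).re) {μ : ℂ} (hμ : μ ∈ spectrum ℂ A) :
    μ.re < 0 := by
  obtain ⟨k, hk⟩ := eigenvalue_mem_ball (A := A)
    (Module.End.hasEigenvalue_iff_mem_spectrum.mpr (by rwa [spectrum_toLin']))
  rw [Metric.mem_closedBall, dist_eq_norm] at hk
  have hre := Complex.re_le_norm (μ - A k k)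
  have hdom := hA k
  rw [Complex.sub_re] at hre
  linarith

lemma re_neg_of_mem_spectrum_of_metzler (M : Matrix m m ℝ)
    (hoff : ∀ i j, i ≠ j → 0 ≤ M i j) (hrow : ∀ i, ∑ j, M i j < 0) {μ : ℂ}
    (hμ : μ ∈ spectrum ℂ (M.map Complex.ofReal)) : μ.re < 0 := by
  refine re_neg_of_mem_spectrum_of_sum_norm_lt _ (fun k => ?_) hμ
  have hnorm : ∀ j ∈ univ.erase k, ‖M.map Complex.ofReal k j‖ = M k j := fun j hj => by
    simp [abs_of_nonneg (hoff k j (ne_of_mem_erase hj).symm)]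
  have hk := hrow k
  rw [← add_sum_erase _ _ (mem_univ k)] at hk
  rw [sum_congr rfl hnorm, map_apply, Complex.ofReal_re]
  linarith

theorem Matrix.spectrum_reindex_fromBlocks_zero₁₂ {l ι K : Type*} [Fintype l] [DecidableEq l]
    [Fintype ι] [DecidableEq ι] [Field K] (e : m ⊕ l ≃ ι) (A : Matrix m m K)
    (C : Matrix l m K) (D : Matrix l l K) :
    spectrum K (reindex e e (fromBlocks A 0 C D)) = spectrum K A ∪ spectrum K D := by
  ext μ
  simp only [mem_spectrum_iff_isRoot_charpoly, charpoly_reindex, charpoly_fromBlocks_zero₁₂,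
    Polynomial.root_mul, Set.mem_union]

end Spectrum

section BlockMatrix

def finSuccProdEquiv (k : ℕ) (ι : Type*) : (Fin k × ι) ⊕ ι ≃ Fin (k + 1) × ι :=
  (Equiv.sumCongr (Equiv.refl _) (Equiv.uniqueProd ι (Fin 1)).symm).trans
    ((Equiv.sumProdDistrib (Fin k) (Fin 1) ι).symm.trans
      (Equiv.prodCongr finSumFinEquiv (Equiv.refl _)))

@[simp] lemma finSuccProdEquiv_inl {k : ℕ} {ι : Type*} (p : Fin k × ι) :
    finSuccProdEquiv k ι (Sum.inl p) = (p.1.castSucc, p.2) := rfl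

@[simp] lemma finSuccProdEquiv_inr {k : ℕ} {ι : Type*} (i : ι) :
    finSuccProdEquiv k ι (Sum.inr i) = (Fin.last k, i) :=
  Prod.ext (Fin.ext (by simp [finSuccProdEquiv])) rfl

variable {k n : ℕ} (Bl : Fin (k + 1) → Fin (k + 1) → Matrix (Fin n) (Fin n) ℝ)

lemma blockMat_eq_reindex_fromBlocks (h : ∀ i : Fin k, Bl i.castSucc (Fin.last k) = 0) :
    blockMat Bl = reindex (finSuccProdEquiv k (Fin n)) (finSuccProdEquiv k (Fin n))
      (fromBlocks (blockMat fun i j => Bl i.castSucc j.castSucc) 0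
        (of fun i q => Bl (Fin.last k) q.1.castSucc i q.2) (Bl (Fin.last k) (Fin.last k))) := by
  rw [← Equiv.symm_apply_eq]
  ext (p | i) (q | j) <;> simp [blockMat, h]

lemma spectrum_blockMat_of_castSucc_last_eq_zero
    (h : ∀ i : Fin k, Bl i.castSucc (Fin.last k) = 0) :
    spectrum ℂ ((blockMat Bl).map Complex.ofReal) =
      spectrum ℂ ((blockMat fun i j => Bl i.castSucc j.castSucc).map Complex.ofReal) ∪
        spectrum ℂ ((Bl (Fin.last k) (Fin.last k)).map Complex.ofReal) := by
  rw [blockMat_eq_reindex_fromBlocks Bl h, reindex_apply, ← submatrix_map, ← reindex_apply,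
    fromBlocks_map, Matrix.map_zero _ Complex.ofReal_zero, spectrum_reindex_fromBlocks_zero₁₂]

end BlockMatrix

lemma tendsto_cexp_mul_mul_pow_atTop {μ : ℂ} (hμ : μ.re < 0) (j : ℕ) :
    Tendsto (fun t : ℝ => Complex.exp (t * μ) * (t : ℂ) ^ j) atTop (𝓝 0) := by
  rw [tendsto_zero_iff_norm_tendsto_zero]
  refine (tendsto_rpow_mul_exp_neg_mul_atTop_nhds_zero j (-μ.re) (by linarith)).congr' ?_
  filter_upwards [eventually_ge_atTop 0] with t ht
  simp [Complex.norm_exp, abs_of_nonneg ht, mul_comm]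

namespace Matrix

variable {m : Type*} [Fintype m] [DecidableEq m]

-- `exp` does not depend on a norm, but these facts are proved in Banach algebras; any norm will do.
theorem exp_algebraMap_complex (c : ℂ) :
    exp (algebraMap ℂ (Matrix m m ℂ) c) = Complex.exp c • 1 := by
  open scoped Norms.Operator in
  rw [← Algebra.algebraMap_eq_smul_one, Complex.exp_eq_exp_ℂ]
  exact (algebraMap_exp_comm c).symm

theorem hasSum_exp (A : Matrix m m ℂ) :
    HasSum (fun j => (j ! : ℂ)⁻¹ • A ^ j) (exp A) := by
  open scoped Norms.Operator in
  exact exp_series_hasSum_exp' A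

theorem exp_map_ofReal (M : Matrix m m ℝ) :
    exp (M.map Complex.ofReal) = (exp M).map Complex.ofReal := by
  open scoped Norms.Operator in
  exact (NormedSpace.map_exp Complex.ofRealHom.mapMatrix
    (continuous_id.matrix_map Complex.continuous_ofReal) M).symm

theorem exp_smul_mulVec_eq_sum (M : Matrix m m ℂ) (μ z : ℂ) {k : ℕ} {v : m → ℂ}
    (hv : ((M - μ • 1) ^ k) *ᵥ v = 0) :
    exp (z • M) *ᵥ v =
      ∑ j ∈ range k, (Complex.exp (z * μ) * z ^ j / j !) • ((M - μ • 1) ^ j *ᵥ v) := by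
  set N := M - μ • 1
  have hsplit : z • M = z • N + algebraMap ℂ _ (z * μ) := by
    simp [N, smul_sub, Algebra.algebraMap_eq_smul_one, smul_smul]
  have hexp : exp (z • M) = Complex.exp (z * μ) • exp (z • N) := by
    rw [hsplit, exp_add_of_commute _ _ (Algebra.commute_algebraMap_right _ _),
      exp_algebraMap_complex, mul_smul_one]
  have hseries : HasSum (fun j => ((j ! : ℂ)⁻¹ • (z • N) ^ j) *ᵥ v) (exp (z • N) *ᵥ v) :=
    (hasSum_exp (z • N)).map (mulVec.addMonoidHomLeft v)
      (continuous_id.matrix_mulVec continuous_const)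
  have htail : ∀ j ∉ range k, ((j ! : ℂ)⁻¹ • (z • N) ^ j) *ᵥ v = 0 := fun j hj => by
    obtain ⟨i, rfl⟩ := Nat.exists_eq_add_of_le' (not_lt.mp (mem_range.not.mp hj))
    rw [smul_pow, pow_add N, smul_mulVec, smul_mulVec, ← mulVec_mulVec, hv, mulVec_zero,
      smul_zero, smul_zero]
  rw [hexp, smul_mulVec, hseries.unique (hasSum_sum_of_ne_finset_zero htail), smul_sum]
  refine sum_congr rfl fun j _ => ?_
  rw [smul_pow, smul_mulVec, smul_mulVec, smul_smul, smul_smul, div_eq_mul_inv]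
  ring_nf

theorem tendsto_exp_smul_mulVec_of_re_neg (M : Matrix m m ℂ)
    (hM : ∀ μ ∈ spectrum ℂ M, μ.re < 0) (v : m → ℂ) :
    Tendsto (fun t : ℝ => exp (t • M) *ᵥ v) atTop (𝓝 0) := by
  have hv : v ∈ ⨆ μ, Module.End.maxGenEigenspace (toLin' M) μ :=
    (Module.End.iSup_maxGenEigenspace_eq_top (toLin' M)).symm ▸ Submodule.mem_top
  induction hv using Submodule.iSup_induction' with
  | mem μ w hw =>
    obtain rfl | hw0 := eq_or_ne w 0
    · simp
    have hμ : μ.re < 0 := by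
      refine hM μ ?_
      have : Module.End.HasUnifEigenvalue (toLin' M) μ ⊤ :=
        (Submodule.ne_bot_iff _).mpr ⟨w, hw, hw0⟩
      simpa [spectrum_toLin'] using (this.lt zero_lt_one).mem_spectrum
    obtain ⟨k, hk⟩ := (Module.End.mem_maxGenEigenspace _ _ _).mp hw
    have hkw : ((M - μ • 1) ^ k) *ᵥ w = 0 := by
      simpa [← toLin'_apply, map_pow, map_sub, toLin'_one, Module.End.one_eq_id] using hk
    simp_rw [← Complex.coe_smul, exp_smul_mulVec_eq_sum M μ _ hkw]
    simpa [div_eq_mul_inv] using tendsto_finsetSum (range k) fun j _ =>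
      ((tendsto_cexp_mul_mul_pow_atTop hμ j).mul_const (j ! : ℂ)⁻¹).smul_const
        ((M - μ • 1) ^ j *ᵥ w)
  | zero => simp
  | add x y _ _ hx hy => simpa [mulVec_add] using hx.add hy

theorem tendsto_exp_smul_of_re_neg (M : Matrix m m ℂ) (hM : ∀ μ ∈ spectrum ℂ M, μ.re < 0) :
    Tendsto (fun t : ℝ => exp (t • M)) atTop (𝓝 0) :=
  tendsto_pi_nhds.2 fun i => tendsto_pi_nhds.2 fun j => by
    simpa using tendsto_pi_nhds.1 (tendsto_exp_smul_mulVec_of_re_neg M hM (Pi.single j 1)) i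

theorem tendsto_exp_smul_of_re_neg_ofReal (M : Matrix m m ℝ)
    (hM : ∀ μ ∈ spectrum ℂ (M.map Complex.ofReal), μ.re < 0) :
    Tendsto (fun t : ℝ => exp (t • M)) atTop (𝓝 0) := by
  have hre : ∀ t : ℝ, exp (t • M) = (exp (t • M.map Complex.ofReal)).map Complex.re := by
    intro t
    have hsmul : t • M.map Complex.ofReal = (t • M).map Complex.ofReal := by ext; simp
    rw [hsmul, exp_map_ofReal]
    ext; simp
  simp_rw [hre]
  simpa [Function.comp_def] using
    ((continuous_id.matrix_map Complex.continuous_re).tendsto 0).comp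
      (tendsto_exp_smul_of_re_neg _ hM)

end Matrix

theorem healthy_state_linearization_decays_general
    {n : ℕ}
    (N α β σ δ γ : Fin n → ℝ) (w : Fin n → Fin n → ℝ)
    (hN : ∀ i, 0 < N i) (hα : ∀ i, 0 < α i)
    (hγ : ∀ i, 0 < γ i)
    (hwnn : ∀ i j, 0 ≤ w i j)
    (Φm : Matrix (Fin n) (Fin n) ℝ)
    (hΦ : ∀ i j, Φm i j = if i = j then 0 else (N j / N i) * w i j * γ j)
    (hbal : ∀ i, γ i = ∑ j ∈ Finset.univ.erase i, Φm i j)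
    (U : Matrix (Fin 2 × Fin n) (Fin 2 × Fin n) ℝ)
    (hU : U = blockMat
      ![![-(Matrix.diagonal σ) - Matrix.diagonal γ + Φm, Matrix.diagonal β],
        ![Matrix.diagonal σ, -(Matrix.diagonal δ) - Matrix.diagonal γ + Φm]])
    (J : Matrix (Fin 3 × Fin n) (Fin 3 × Fin n) ℝ)
    (hJ : J = blockMat
      ![![-(Matrix.diagonal σ) - Matrix.diagonal γ + Φm, Matrix.diagonal β, 0],
        ![Matrix.diagonal σ, -(Matrix.diagonal δ) - Matrix.diagonal γ + Φm, 0],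
        ![0, Matrix.diagonal δ, -(Matrix.diagonal α) - Matrix.diagonal γ + Φm]])
    (hsU : spectralAbscissa U < 0) :
    Tendsto (fun t : ℝ => exp (t • J)) atTop (nhds 0) ∧
    ∀ v : Fin 3 × Fin n → ℝ,
      Tendsto (fun t : ℝ => (exp (t • J)).mulVec v) atTop (nhds 0) := by
  have hΦ_nonneg : ∀ i j, 0 ≤ Φm i j := fun i j => by
    rw [hΦ]
    split_ifs
    · exact le_rfl
    · exact mul_nonneg (mul_nonneg (div_pos (hN j) (hN i)).le (hwnn i j)) (hγ j).le
  have hΦ_row : ∀ i, ∑ j, Φm i j = γ i := fun i => by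
    rw [hbal i, ← add_sum_erase _ _ (mem_univ i), hΦ i i, if_pos rfl, zero_add]
  have hZ : ∀ μ ∈ spectrum ℂ ((-(diagonal α) - diagonal γ + Φm).map Complex.ofReal),
      μ.re < 0 := fun μ => re_neg_of_mem_spectrum_of_metzler _
    (fun i j hij => by simpa [diagonal_apply_ne _ hij] using hΦ_nonneg i j)
    (fun i => by simpa [sum_add_distrib, hΦ_row, diagonal_apply] using hα i)
  have hJ_spec : ∀ μ ∈ spectrum ℂ (J.map Complex.ofReal), μ.re < 0 := by
    rw [hJ, spectrum_blockMat_of_castSucc_last_eq_zero _ fun i => by fin_cases i <;> rfl]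
    rintro μ (hμ | hμ)
    · refine (re_le_spectralAbscissa U ?_).trans_lt hsU
      convert hμ using 3
      rw [hU]
      congr 1
      funext i j
      fin_cases i <;> fin_cases j <;> rfl
    · exact hZ μ hμ
  have hdecay := tendsto_exp_smul_of_re_neg_ofReal J hJ_spec
  exact ⟨hdecay, fun v => by
    simpa [Function.comp_def] using
      ((continuous_id.matrix_mulVec (continuous_const (y := v))).tendsto 0).comp hdecay⟩

/-- **Exponential decay of the linearized healthy-state dynamics.**
If `s(U) < 0`, then `exp(tJ) → 0` as `t → ∞` for the Jacobian `J` of the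
`(e,x,r)`-dynamics at the healthy state, so every solution of the linearized dynamics
converges to zero. -/
theorem healthy_state_linearization_decays
    {n : ℕ} (hn : 1 ≤ n)
    (N α β σ δ γ : Fin n → ℝ) (w : Fin n → Fin n → ℝ)
    (hN : ∀ i, 0 < N i) (hα : ∀ i, 0 < α i) (hβ : ∀ i, 0 < β i)
    (hσ : ∀ i, 0 < σ i) (hδ : ∀ i, 0 < δ i) (hγ : ∀ i, 0 < γ i)
    (hwdiag : ∀ i, w i i = 0) (hwnn : ∀ i j, 0 ≤ w i j)
    (hwsum : ∀ j, ∑ i ∈ Finset.univ.erase j, w i j = 1)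
    (Φm : Matrix (Fin n) (Fin n) ℝ)
    (hΦ : ∀ i j, Φm i j = if i = j then 0 else (N j / N i) * w i j * γ j)
    (hbal : ∀ i, γ i = ∑ j ∈ Finset.univ.erase i, Φm i j)
    (U : Matrix (Fin 2 × Fin n) (Fin 2 × Fin n) ℝ)
    (hU : U = blockMat
      ![![-(Matrix.diagonal σ) - Matrix.diagonal γ + Φm, Matrix.diagonal β],
        ![Matrix.diagonal σ, -(Matrix.diagonal δ) - Matrix.diagonal γ + Φm]])
    (J : Matrix (Fin 3 × Fin n) (Fin 3 × Fin n) ℝ)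
    (hJ : J = blockMat
      ![![-(Matrix.diagonal σ) - Matrix.diagonal γ + Φm, Matrix.diagonal β, 0],
        ![Matrix.diagonal σ, -(Matrix.diagonal δ) - Matrix.diagonal γ + Φm, 0],
        ![0, Matrix.diagonal δ, -(Matrix.diagonal α) - Matrix.diagonal γ + Φm]])
    (hsU : spectralAbscissa U < 0) :
    Tendsto (fun t : ℝ => exp (t • J)) atTop (nhds 0) ∧
    ∀ v : Fin 3 × Fin n → ℝ,
      Tendsto (fun t : ℝ => (exp (t • J)).mulVec v) atTop (nhds 0) :=
  healthy_state_linearization_decays_general N α β σ δ γ w hN hα hγ hwnn Φm hΦ hbal U hU J hJ hsU
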